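/- Let S = (R_i)_{i∈I} and S' = (R'_i)_{i∈I} be two families of fuzzy relations on U indexed by the same set I, and let X, X' be fuzzy relations on U. Then for each k ∈ {1,2,3}: (X ≈ X') ⊓ (S ≈ S') ⊓ SD_k(S)(X) = (X ≈ X') ⊓ (S ≈ S') ⊓ SD_k(S')(X'). -/
import Mathlib


open scoped symmDiff

/- L is a complete Heyting algebra (`Order.Frame`), regarded as a complete residuated
lattice with ⊗ = ⊓, residuum the Heyting implication ⇨, biresiduum ⇔ (`bihimp`),
and top element as the unit 1. -/
variable {L : Type*} [Order.Frame L] {U : Type*}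

/-- Composition of fuzzy relations: (R ∘ P)(u,v) = ⨆ w, R(u,w) ⊓ P(w,v). -/
def fcomp (R P : U → U → L) : U → U → L := fun u v => ⨆ w, R u w ⊓ P w v

/-- Inclusion degree of fuzzy relations: R ≲ Q. -/
def incl (R Q : U → U → L) : L := ⨅ u, ⨅ v, R u v ⇨ Q u v

/-- Equality degree of fuzzy relations: R ≈ Q. -/
def eqd (R Q : U → U → L) : L := ⨅ u, ⨅ v, R u v ⇔ Q u v

/-- SD_1(S)(X) = ⨅ i, ((X ∘ R_i) ≲ (R_i ∘ X)). -/
def SD1 {I : Type*} (S : I → U → U → L) (X : U → U → L) : L :=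
  ⨅ i, incl (fcomp X (S i)) (fcomp (S i) X)

/-- SD_2(S)(X) = ⨅ i, ((R_i ∘ X) ≲ (X ∘ R_i)). -/
def SD2 {I : Type*} (S : I → U → U → L) (X : U → U → L) : L :=
  ⨅ i, incl (fcomp (S i) X) (fcomp X (S i))

/-- SD_3(S)(X) = SD_1(S)(X) ⊓ SD_2(S)(X). -/
def SD3 {I : Type*} (S : I → U → U → L) (X : U → U → L) : L :=
  SD1 S X ⊓ SD2 S X

/-- Degree of equality of two families of fuzzy relations: (S ≈ S') = ⨅ i, (R_i ≈ R'_i). -/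
def famEq {I : Type*} (S S' : I → U → U → L) : L := ⨅ i, eqd (S i) (S' i)


lemma eqd_comm' (R Q : U → U → L) : eqd R Q = eqd Q R := by
  unfold eqd; simp only [bihimp_comm]

lemma famEq_comm' {I : Type*} (S S' : I → U → U → L) : famEq S S' = famEq S' S := by
  unfold famEq; simp only [eqd_comm']

lemma eqd_mp (R Q : U → U → L) (u v : U) : eqd R Q ⊓ R u v ≤ Q u v := by
  have h : eqd R Q ≤ R u v ⇨ Q u v := by
    refine le_trans (iInf_le_of_le u (iInf_le _ v)) ?_
    rw [bihimp_def]; exact inf_le_right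
  exact le_himp_iff.mp h

lemma fcomp_ctx (e : L) (A A' B B' : U → U → L)
    (hA : ∀ u v, e ⊓ A u v ≤ A' u v) (hB : ∀ u v, e ⊓ B u v ≤ B' u v)
    (u v : U) : e ⊓ fcomp A B u v ≤ fcomp A' B' u v := by
  unfold fcomp
  rw [inf_iSup_eq]
  refine iSup_le fun w => le_trans ?_ (le_iSup _ w)
  calc e ⊓ (A u w ⊓ B w v) = (e ⊓ A u w) ⊓ (e ⊓ B w v) := by
        rw [inf_inf_distrib_left]
    _ ≤ A' u w ⊓ B' w v := inf_le_inf (hA u w) (hB w v)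

lemma incl_ctx (e : L) (C C' D D' : U → U → L)
    (hC : ∀ u v, e ⊓ C' u v ≤ C u v) (hD : ∀ u v, e ⊓ D u v ≤ D' u v) :
    e ⊓ incl C D ≤ incl C' D' := by
  refine le_iInf fun u => le_iInf fun v => le_himp_iff.mpr ?_
  have h1 : incl C D ⊓ C u v ≤ D u v :=
    le_himp_iff.mp (iInf_le_of_le u (iInf_le _ v))
  have step1 : e ⊓ incl C D ⊓ C' u v ≤ e ⊓ (incl C D ⊓ C u v) := by
    refine le_inf (le_trans inf_le_left inf_le_left) (le_inf
      (le_trans inf_le_left inf_le_right) ?_)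
    exact le_trans (le_inf (le_trans inf_le_left inf_le_left) inf_le_right) (hC u v)
  exact step1.trans ((inf_le_inf_left e h1).trans (hD u v))

section keys
variable {I : Type*} (S S' : I → U → U → L) (X X' : U → U → L)

lemma ctx_facts :
    (∀ u v, (eqd X X' ⊓ famEq S S') ⊓ X u v ≤ X' u v) ∧
    (∀ u v, (eqd X X' ⊓ famEq S S') ⊓ X' u v ≤ X u v) ∧
    (∀ i u v, (eqd X X' ⊓ famEq S S') ⊓ S i u v ≤ S' i u v) ∧
    (∀ i u v, (eqd X X' ⊓ famEq S S') ⊓ S' i u v ≤ S i u v) := by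
  refine ⟨fun u v => ?_, fun u v => ?_, fun i u v => ?_, fun i u v => ?_⟩
  · exact le_trans (inf_le_inf_right _ inf_le_left) (eqd_mp X X' u v)
  · refine le_trans (inf_le_inf_right _ inf_le_left) ?_
    rw [eqd_comm']; exact eqd_mp X' X u v
  · refine le_trans (inf_le_inf_right _ (le_trans inf_le_right (iInf_le _ i))) ?_
    exact eqd_mp (S i) (S' i) u v
  · refine le_trans (inf_le_inf_right _ (le_trans inf_le_right (iInf_le _ i))) ?_
    rw [eqd_comm']; exact eqd_mp (S' i) (S i) u v

lemma SD1_key : eqd X X' ⊓ famEq S S' ⊓ SD1 S X ≤ SD1 S' X' := by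
  obtain ⟨hX, hX', hS, hS'⟩ := ctx_facts S S' X X'
  set e := eqd X X' ⊓ famEq S S' with he
  refine le_iInf fun i => ?_
  refine le_trans (inf_le_inf_left e (iInf_le _ i)) ?_
  exact incl_ctx e _ _ _ _ (fcomp_ctx e _ _ _ _ hX' (hS' i))
    (fcomp_ctx e _ _ _ _ (hS i) hX)

lemma SD2_key : eqd X X' ⊓ famEq S S' ⊓ SD2 S X ≤ SD2 S' X' := by
  obtain ⟨hX, hX', hS, hS'⟩ := ctx_facts S S' X X'
  set e := eqd X X' ⊓ famEq S S' with he
  refine le_iInf fun i => ?_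
  refine le_trans (inf_le_inf_left e (iInf_le _ i)) ?_
  exact incl_ctx e _ _ _ _ (fcomp_ctx e _ _ _ _ (hS' i) hX')
    (fcomp_ctx e _ _ _ _ hX (hS i))

lemma SD3_key : eqd X X' ⊓ famEq S S' ⊓ SD3 S X ≤ SD3 S' X' := by
  refine le_inf ?_ ?_
  · exact le_trans (inf_le_inf_left _ inf_le_left) (SD1_key S S' X X')
  · exact le_trans (inf_le_inf_left _ inf_le_right) (SD2_key S S' X X')

end keys

/-- For each k ∈ {1,2,3}:
(X ≈ X') ⊓ (S ≈ S') ⊓ SD_k(S)(X) = (X ≈ X') ⊓ (S ≈ S') ⊓ SD_k(S')(X'). -/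
theorem stmt9 [Nonempty U] {I : Type*} (S S' : I → U → U → L) (X X' : U → U → L) :
    (eqd X X' ⊓ famEq S S' ⊓ SD1 S X = eqd X X' ⊓ famEq S S' ⊓ SD1 S' X') ∧
    (eqd X X' ⊓ famEq S S' ⊓ SD2 S X = eqd X X' ⊓ famEq S S' ⊓ SD2 S' X') ∧
    (eqd X X' ⊓ famEq S S' ⊓ SD3 S X = eqd X X' ⊓ famEq S S' ⊓ SD3 S' X') := by
  have sym : eqd X' X ⊓ famEq S' S = eqd X X' ⊓ famEq S S' := by
    rw [eqd_comm', famEq_comm']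
  refine ⟨?_, ?_, ?_⟩ <;>
  · refine le_antisymm (le_inf inf_le_left ?_) (le_inf inf_le_left ?_)
    · first
      | exact SD1_key S S' X X' | exact SD2_key S S' X X' | exact SD3_key S S' X X'
    · rw [← sym]
      first
      | exact SD1_key S' S X' X | exact SD2_key S' S X' X | exact SD3_key S' S X' X
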